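/- Let (R, m) be a regular local ring of dimension r with regular system of parameters x_1, …, x_r, and let M be a finitely generated R-module. If x_1, …, x_r is an M-regular sequence, then M is flat (equivalently, free) over R. -/

import Mathlib

/-!
Induct on the length of the sequence, passing from `R` and `M` to `R ⧸ (x₁)` and `M ⧸ x₁M`:
the images of the remaining elements form an `M ⧸ x₁M`-regular sequence generating the maximal
ideal of `R ⧸ (x₁)`, and since `x₁` is `M`-regular and lies in the maximal ideal, freeness of
`M ⧸ x₁M` over `R ⧸ (x₁)` lifts to `M` by Nakayama. For the empty sequence the maximal ideal
is zero, so `R` is a field.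
-/

open RingTheory.Sequence IsLocalRing

theorem IsLocalRing.free_of_maximalIdeal_eq_bot {R : Type*} [CommRing R] [IsLocalRing R]
    (M : Type*) [AddCommGroup M] [Module R M] [Module.FinitePresentation R M]
    (h : maximalIdeal R = ⊥) : Module.Free R M := by
  apply Module.free_of_maximalIdeal_rTensor_injective
  have : Subsingleton (maximalIdeal R) := by rw [h]; infer_instance
  exact Function.injective_of_subsingleton _

theorem IsLocalRing.quotient_span_singleton {R : Type*} [CommRing R] [IsLocalRing R]
    {r : R} (hr : r ∈ maximalIdeal R) : IsLocalRing (R ⧸ Ideal.span {r}) :=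
  have : Nontrivial (R ⧸ Ideal.span {r}) := Ideal.Quotient.nontrivial_iff.mpr <|
    ne_top_of_le_ne_top (maximalIdeal.isMaximal R).ne_top
      ((Ideal.span_singleton_le_iff_mem _).mpr hr)
  .of_surjective' _ Ideal.Quotient.mk_surjective

theorem IsLocalRing.ofList_map_quotient_eq_maximalIdeal {R : Type*} [CommRing R] [IsLocalRing R]
    {r : R} {rs : List R} (h : Ideal.ofList (r :: rs) = maximalIdeal R)
    [IsLocalRing (R ⧸ Ideal.span {r})] :
    Ideal.ofList (rs.map (Ideal.Quotient.mk (Ideal.span {r}))) =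
      maximalIdeal (R ⧸ Ideal.span {r}) := by
  rw [← Ideal.map_ofList, ← map_maximalIdeal_of_surjective _ Ideal.Quotient.mk_surjective, ← h,
    Ideal.ofList_cons, Ideal.map_sup, Ideal.map_quotient_self, bot_sup_eq]

instance QuotSMulTop.finitePresentation {R : Type*} [CommRing R] (r : R)
    (M : Type*) [AddCommGroup M] [Module R M] [Module.FinitePresentation R M] :
    Module.FinitePresentation (R ⧸ Ideal.span {r}) (QuotSMulTop r M) :=
  .of_equiv ((QuotSMulTop.equivQuotTensor r M).extendScalarsOfSurjective
    Ideal.Quotient.mk_surjective).symm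

theorem RingTheory.Sequence.IsRegular.free_of_ofList_eq_maximalIdeal {R : Type*} [CommRing R]
    [IsLocalRing R] {M : Type*} [AddCommGroup M] [Module R M] [Module.FinitePresentation R M]
    {rs : List R} (hreg : IsRegular M rs) (hrs : Ideal.ofList rs = maximalIdeal R) :
    Module.Free R M := by
  revert hrs
  refine IsRegular.ndrecIterModByRegularWithRing (motive := fun R _ M _ _ rs =>
    ∀ [IsLocalRing R] [Module.FinitePresentation R M],
      Ideal.ofList rs = maximalIdeal R → Module.Free R M) ?nil ?cons hreg
  case nil =>
    exact fun R _ M _ _ _ _ _ hrs ↦ free_of_maximalIdeal_eq_bot M (by simpa using hrs.symm)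
  case cons =>
    intro R _ M _ _ r rs hr _ ih _ _ hrs
    have hrm : r ∈ maximalIdeal R := hrs ▸ Ideal.subset_span (List.mem_cons_self ..)
    have := quotient_span_singleton hrm
    exact (Module.free_quotSMulTop_iff_free R M (maximalIdeal_le_jacobson _ hrm) hr).mp
      (ih (ofList_map_quotient_eq_maximalIdeal hrs))

theorem stmt_1_general {R : Type*} [CommRing R] [IsNoetherianRing R] [IsLocalRing R]
    (r : ℕ)
    (x : Fin r → R)
    (hx : Ideal.span (Set.range x) = IsLocalRing.maximalIdeal R)
    (M : Type*) [AddCommGroup M] [Module R M] [Module.Finite R M]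
    (hreg : RingTheory.Sequence.IsRegular M (List.ofFn x)) :
    Module.Flat R M := by
  have : Module.FinitePresentation R M := Module.finitePresentation_of_finite R M
  have hspan : Ideal.ofList (List.ofFn x) = maximalIdeal R := by
    rw [← hx, Ideal.ofList]
    congr
    ext
    simp [List.mem_ofFn]
  have := hreg.free_of_ofList_eq_maximalIdeal hspan
  infer_instance

/-- If `R` is a regular local ring of dimension `r` with regular system of parameters
`x 0, …, x (r-1)` and `M` is a finitely generated `R`-module on which `x` is a regular
sequence, then `M` is flat over `R`. -/
theorem stmt_1 {R : Type*} [CommRing R] [IsNoetherianRing R] [IsLocalRing R]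
    (r : ℕ) (hdim : ringKrullDim R = r)
    (x : Fin r → R)
    (hx : Ideal.span (Set.range x) = IsLocalRing.maximalIdeal R)
    (M : Type*) [AddCommGroup M] [Module R M] [Module.Finite R M]
    (hreg : RingTheory.Sequence.IsRegular M (List.ofFn x)) :
    Module.Flat R M :=
  stmt_1_general r x hx M hreg
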